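/- arXiv:2507.15435 — 6 statements merged into one kernel-verified Lean document; each statement's English description precedes it below -/
import Mathlib

section
/- Let D be a digraph of order p ≥ 3 containing a path P = x₁x₂⋯x_m with 2 ≤ m ≤ p−1, and let x be a vertex not on P. If the number of arcs between x and V(P) (counting both directions) is at least m+2, then there exists an index i with 1 ≤ i ≤ m−1 such that both x_i→x and x→x_{i+1} are arcs of D (i.e., x can be inserted into P, yielding a path of length m through all of V(P) ∪ {x}). -/
variable {V : Type*}

/-- Out-degree of `u` in the digraph with arc relation `A`. -/
noncomputable def outDeg (A : V → V → Prop) (u : V) : ℕ := Nat.card {v | A u v}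

/-- In-degree of `u`. -/
noncomputable def inDeg (A : V → V → Prop) (u : V) : ℕ := Nat.card {v | A v u}

/-- Degree of `u`: out-degree plus in-degree. -/
noncomputable def deg (A : V → V → Prop) (u : V) : ℕ := outDeg A u + inDeg A u

/-- Number of arcs between `u` and the set `S`, counting both directions. -/
noncomputable def degOn (A : V → V → Prop) (u : V) (S : Set V) : ℕ :=
  Nat.card {v | v ∈ S ∧ A u v} + Nat.card {v | v ∈ S ∧ A v u}

/-- `x : Fin m → V` is a directed path (distinct vertices, consecutive arcs). -/
def IsPath (A : V → V → Prop) {m : ℕ} (x : Fin m → V) : Prop :=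
  Function.Injective x ∧ ∀ (i : ℕ) (h : i + 1 < m), A (x ⟨i, by omega⟩) (x ⟨i + 1, h⟩)

/-- `x : Fin m → V` is a directed cycle (distinct vertices, cyclically consecutive arcs). -/
def IsCycle (A : V → V → Prop) {m : ℕ} (x : Fin m → V) : Prop :=
  Function.Injective x ∧
    ∀ (i : ℕ) (h : i < m), A (x ⟨i, h⟩) (x ⟨(i + 1) % m, Nat.mod_lt _ (by omega)⟩)

/-- Strong connectivity: every vertex reaches every other by a directed path. -/
def Strong (A : V → V → Prop) : Prop := ∀ x y : V, Relation.ReflTransGen A x y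

/-- 2-strong connectivity: order at least 3 and deleting any vertex leaves a strong digraph. -/
def TwoStrong (A : V → V → Prop) : Prop :=
  3 ≤ Nat.card V ∧ ∀ w : V, Strong (fun a b : {v : V // v ≠ w} => A a.1 b.1)

/-- The digraph is Hamiltonian: it has a directed cycle through all vertices. -/
def Hamiltonian (A : V → V → Prop) : Prop :=
  ∃ c : Fin (Nat.card V) → V, Function.Bijective c ∧ IsCycle A c

/-- The digraph has a Hamiltonian bypass: a Hamiltonian directed path whose
initial vertex dominates its terminal vertex. -/
def HasHamBypass (A : V → V → Prop) : Prop :=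
  ∃ f : Fin (Nat.card V) → V, Function.Bijective f ∧
    (∀ (i : ℕ) (h : i + 1 < Nat.card V), A (f ⟨i, by omega⟩) (f ⟨i + 1, h⟩)) ∧
    ∃ h0 : 0 < Nat.card V, A (f ⟨0, h0⟩) (f ⟨Nat.card V - 1, by omega⟩)

/-- insertion lemma, case d(x,V(P)) ≥ m+2. -/
theorem stmt0 {V : Type*} (A : V → V → Prop) (hloop : ∀ v, ¬ A v v)
    (p : ℕ) (hp : 3 ≤ p) (hcard : Nat.card V = p)
    (m : ℕ) (hm2 : 2 ≤ m) (hmp : m ≤ p - 1)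
    (x : Fin m → V) (hpath : IsPath A x)
    (v : V) (hv : v ∉ Set.range x)
    (hdeg : m + 2 ≤ degOn A v (Set.range x)) :
    ∃ (i : ℕ) (h : i + 1 < m), A (x ⟨i, by omega⟩) v ∧ A v (x ⟨i + 1, h⟩) := by
  classical
  obtain ⟨hinj, harc⟩ := hpath
  by_contra hcon
  push_neg at hcon
  set a : ℕ → ℕ := fun i => if h : i < m then (if A v (x ⟨i, h⟩) then 1 else 0) else 0 with ha
  set b : ℕ → ℕ := fun i => if h : i < m then (if A (x ⟨i, h⟩) v then 1 else 0) else 0 with hb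
  have key : degOn A v (Set.range x) =
      (∑ i ∈ Finset.range m, a i) + (∑ i ∈ Finset.range m, b i) := by
    have h1 : {w | w ∈ Set.range x ∧ A v w} = x '' {i | A v (x i)} := by
      ext w
      constructor
      · rintro ⟨⟨i, rfl⟩, h⟩; exact ⟨i, h, rfl⟩
      · rintro ⟨i, h, rfl⟩; exact ⟨⟨i, rfl⟩, h⟩
    have h2 : {w | w ∈ Set.range x ∧ A w v} = x '' {i | A (x i) v} := by
      ext w
      constructor
      · rintro ⟨⟨i, rfl⟩, h⟩; exact ⟨i, h, rfl⟩
      · rintro ⟨i, h, rfl⟩; exact ⟨⟨i, rfl⟩, h⟩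
    have c1 : Nat.card {w | w ∈ Set.range x ∧ A v w} = ∑ i ∈ Finset.range m, a i := by
      rw [h1, Nat.card_image_of_injective hinj, Nat.card_eq_fintype_card,
        Fintype.card_subtype, Finset.card_filter]
      rw [← Fin.sum_univ_eq_sum_range a m]
      apply Finset.sum_congr rfl
      intro i _
      simp [ha, i.isLt]
    have c2 : Nat.card {w | w ∈ Set.range x ∧ A w v} = ∑ i ∈ Finset.range m, b i := by
      rw [h2, Nat.card_image_of_injective hinj, Nat.card_eq_fintype_card,
        Fintype.card_subtype, Finset.card_filter]
      rw [← Fin.sum_univ_eq_sum_range b m]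
      apply Finset.sum_congr rfl
      intro i _
      simp [hb, i.isLt]
    rw [degOn, c1, c2]
  obtain ⟨n, rfl⟩ : ∃ n, m = n + 1 := ⟨m - 1, by omega⟩
  have suma : ∑ i ∈ Finset.range (n + 1), a i = (∑ i ∈ Finset.range n, a (i + 1)) + a 0 :=
    Finset.sum_range_succ' a n
  have sumb : ∑ i ∈ Finset.range (n + 1), b i = (∑ i ∈ Finset.range n, b i) + b n :=
    Finset.sum_range_succ b n
  have hmid : ∑ i ∈ Finset.range n, (a (i + 1) + b i) ≤ ∑ i ∈ Finset.range n, 1 := by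
    apply Finset.sum_le_sum
    intro i hi
    rw [Finset.mem_range] at hi
    have hi1 : i + 1 < n + 1 := by omega
    have := hcon i hi1
    simp only [ha, hb]
    rw [dif_pos hi1, dif_pos (show i < n + 1 by omega)]
    by_cases hA : A (x ⟨i, by omega⟩) v
    · simp [hA, this hA]
    · split <;> simp [hA]
  rw [Finset.sum_add_distrib] at hmid
  have ha0 : a 0 ≤ 1 := by simp only [ha]; split <;> [skip; omega] <;> split <;> omega
  have hbn : b n ≤ 1 := by simp only [hb]; split <;> [skip; omega] <;> split <;> omega
  simp only [Finset.sum_const, smul_eq_mul, mul_one, Finset.card_range] at hmid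
  omega
end

section
/- Let D be a digraph, let P = u₁u₂⋯u_s be a path in D (possibly s = 1), and let Q = v₁v₂⋯v_t (t ≥ 2) be a path in the subdigraph induced by V(D) ∖ V(P). Suppose that for each i with 1 ≤ i ≤ s there exists an index j (depending on i) with 1 ≤ j ≤ t−1 such that v_j u_i and u_i v_{j+1} are arcs of D. Then for every k with 1 ≤ k ≤ s, D contains a path from v₁ to v_t of length t + k − 1 whose vertex set is {v₁,…,v_t} ∪ {u₁,…,u_k}. -/
variable {V : Type*}

/-- multi-insertion lemma of Bang-Jensen, Gutin and Li. -/
theorem stmt3 {V : Type*} (A : V → V → Prop) (hloop : ∀ v, ¬ A v v)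
    (s t : ℕ) (hs : 1 ≤ s) (ht : 2 ≤ t)
    (u : Fin s → V) (hu : IsPath A u)
    (v : Fin t → V) (hv : IsPath A v)
    (hdisj : ∀ i j, u i ≠ v j)
    (hins : ∀ i : Fin s, ∃ (j : ℕ) (h : j + 1 < t),
      A (v ⟨j, by omega⟩) (u i) ∧ A (u i) (v ⟨j + 1, h⟩)) :
    ∀ (k : ℕ) (_hk1 : 1 ≤ k) (_hks : k ≤ s),
      ∃ w : Fin (t + k) → V, IsPath A w ∧
        w ⟨0, by omega⟩ = v ⟨0, by omega⟩ ∧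
        w ⟨t + k - 1, by omega⟩ = v ⟨t - 1, by omega⟩ ∧
        Set.range w = Set.range v ∪ {a | ∃ (i : ℕ) (h : i < k), a = u ⟨i, by omega⟩} := by
  classical
  have ht1 : 0 < t := by omega
  set v' : ℕ → V := fun j => if h : j < t then v ⟨j, h⟩ else v ⟨0, ht1⟩ with hv'def
  set u' : ℕ → V := fun m => if h : m < s then u ⟨m, h⟩ else u ⟨0, by omega⟩ with hu'def
  have hv' : ∀ j (h : j < t), v' j = v ⟨j, h⟩ := by
    intro j h; simp only [hv'def]; rw [dif_pos h]
  have hu' : ∀ m (h : m < s), u' m = u ⟨m, h⟩ := by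
    intro m h; simp only [hu'def]; rw [dif_pos h]
  have hv'inj : ∀ i j, i < t → j < t → v' i = v' j → i = j := by
    intro i j hi hj hEq
    rw [hv' i hi, hv' j hj] at hEq
    have := hv.1 hEq
    exact congrArg Fin.val this
  have hu'inj : ∀ i j, i < s → j < s → u' i = u' j → i = j := by
    intro i j hi hj hEq
    rw [hu' i hi, hu' j hj] at hEq
    have := hu.1 hEq
    exact congrArg Fin.val this
  have hv'arc : ∀ i, i + 1 < t → A (v' i) (v' (i + 1)) := by
    intro i h; rw [hv' i (by omega), hv' (i + 1) h]; exact hv.2 i h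
  have hu'arc : ∀ i, i + 1 < s → A (u' i) (u' (i + 1)) := by
    intro i h; rw [hu' i (by omega), hu' (i + 1) h]; exact hu.2 i h
  have hdisj' : ∀ i j, u' i ≠ v' j := by
    intro i j
    simp only [hu'def, hv'def]
    split <;> split <;> apply hdisj
  have hfex : ∀ m, ∃ g, m < s → g + 1 < t ∧ A (v' g) (u' m) ∧ A (u' m) (v' (g + 1)) := by
    intro m
    by_cases hm : m < s
    · obtain ⟨j, hj, h1, h2⟩ := hins ⟨m, hm⟩
      refine ⟨j, fun _ => ⟨hj, ?_, ?_⟩⟩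
      · rw [hv' j (by omega), hu' m hm]; exact h1
      · rw [hu' m hm, hv' (j + 1) hj]; exact h2
    · exact ⟨0, fun h => absurd h hm⟩
  choose f' hf' using hfex
  have main : ∀ k, k ≤ s → ∃ (w : ℕ → V) (e : ℕ → ℕ),
      (∀ i j, i < j → j < t + k → w i ≠ w j) ∧
      (∀ i, i + 1 < t + k → A (w i) (w (i + 1))) ∧
      (∀ j, j < t → e j < t + k) ∧
      (∀ j1 j2, j1 < j2 → j2 < t → e j1 < e j2) ∧
      (∀ j, j < t → w (e j) = v' j) ∧
      e 0 = 0 ∧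
      e (t - 1) = t + k - 1 ∧
      (∀ i, i < t + k → (∃ j, j < t ∧ w i = v' j) ∨ ∃ m, m < k ∧ w i = u' m) ∧
      (∀ m, m < k → ∃ i, i < t + k ∧ w i = u' m) ∧
      (∀ g, g + 1 < t → (∀ m, m < k → f' m ≠ g) → e (g + 1) = e g + 1) := by
    intro k
    induction k using Nat.strong_induction_on with
    | _ k IH =>
    intro hks
    rcases Nat.eq_zero_or_pos k with hk0 | hkpos
    · subst hk0
      refine ⟨v', id, ?_, ?_, ?_, ?_, ?_, rfl, ?_, ?_, ?_, ?_⟩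
      · intro i j hij hj hEq
        have := hv'inj i j (by omega) (by omega) hEq; omega
      · intro i h; exact hv'arc i (by omega)
      · intro j hj; show j < t + 0; omega
      · intro j1 j2 h _; exact h
      · intro j _; rfl
      · show t - 1 = t + 0 - 1; omega
      · intro i hi; exact Or.inl ⟨i, by omega, rfl⟩
      · intro m hm; omega
      · intro g _ _; rfl
    · -- inductive step
      have hk1s : k - 1 < s := by omega
      obtain ⟨g, hgdef⟩ : ∃ g, g = f' (k - 1) := ⟨_, rfl⟩
      have hfk := hf' (k - 1) hk1s
      rw [← hgdef] at hfk
      obtain ⟨hgt, harc1, harc2⟩ := hfk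
      have hexg : ∃ m, f' m = g := ⟨k - 1, hgdef.symm⟩
      obtain ⟨a, hadef⟩ : ∃ a, a = Nat.find hexg := ⟨_, rfl⟩
      have hfa : f' a = g := hadef ▸ Nat.find_spec hexg
      have hak : a ≤ k - 1 := hadef ▸ Nat.find_le hgdef.symm
      have hmin : ∀ i, i < a → f' i ≠ g := by
        intro i hi; exact Nat.find_min hexg (hadef ▸ hi)
      obtain ⟨w', e', I1, I2, I3, I4, I5, I6, I7, I8, I9, I10⟩ := IH a (by omega) (by omega)
      obtain ⟨p, hpdef⟩ : ∃ p, p = e' g := ⟨_, rfl⟩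
      obtain ⟨L, hLdef⟩ : ∃ L, L = k - a := ⟨_, rfl⟩
      have hL1 : 1 ≤ L := by omega
      have hpb : p < t + a := hpdef ▸ I3 g (by omega)
      have hgap : e' (g + 1) = p + 1 := by
        rw [hpdef]; exact I10 g hgt (fun m hm => hmin m hm)
      have hp1 : p + 1 < t + a := by
        have h1 := I3 (g + 1) (by omega)
        omega
      have htk : t + k = t + a + L := by omega
      set w : ℕ → V := fun i =>
        if i ≤ p then w' i else if i ≤ p + L then u' (a + i - p - 1) else w' (i - L)
        with hwdef
      set e : ℕ → ℕ := fun j => if e' j ≤ p then e' j else e' j + L with hedef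
      have hw1 : ∀ i, i ≤ p → w i = w' i := by
        intro i h; simp only [hwdef]; rw [if_pos h]
      have hw2 : ∀ i, p < i → i ≤ p + L → w i = u' (a + i - p - 1) := by
        intro i h1 h2; simp only [hwdef]; rw [if_neg (by omega), if_pos h2]
      have hw3 : ∀ i, p + L < i → w i = w' (i - L) := by
        intro i h; simp only [hwdef]; rw [if_neg (by omega), if_neg (by omega)]
      have he1 : ∀ j, e' j ≤ p → e j = e' j := by
        intro j h; simp only [hedef]; rw [if_pos h]
      have he2 : ∀ j, p < e' j → e j = e' j + L := by
        intro j h; simp only [hedef]; rw [if_neg (by omega)]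
      have hmidne : ∀ i m, i < t + a → a ≤ m → m < s → w' i ≠ u' m := by
        intro i m hi ham hms hEq
        rcases I8 i hi with ⟨j, hj, hwv⟩ | ⟨m', hm', hwu⟩
        · exact hdisj' m j (hwv ▸ hEq).symm
        · have := hu'inj m' m (by omega) hms (hwu ▸ hEq)
          omega
      refine ⟨w, e, ?_, ?_, ?_, ?_, ?_, ?_, ?_, ?_, ?_, ?_⟩
      · -- injectivity
        intro i j hij hjb
        by_cases hi1 : i ≤ p
        · rw [hw1 i hi1]
          by_cases hj1 : j ≤ p
          · rw [hw1 j hj1]; exact I1 i j hij (by omega)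
          · by_cases hj2 : j ≤ p + L
            · rw [hw2 j (by omega) hj2]
              exact hmidne i (a + j - p - 1) (by omega) (by omega) (by omega)
            · rw [hw3 j (by omega)]
              exact I1 i (j - L) (by omega) (by omega)
        · by_cases hi2 : i ≤ p + L
          · rw [hw2 i (by omega) hi2]
            by_cases hj2 : j ≤ p + L
            · rw [hw2 j (by omega) hj2]
              intro hEq
              have := hu'inj (a + i - p - 1) (a + j - p - 1) (by omega) (by omega) hEq
              omega
            · rw [hw3 j (by omega)]
              intro hEq
              exact hmidne (j - L) (a + i - p - 1) (by omega) (by omega) (by omega) hEq.symm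
          · rw [hw3 i (by omega), hw3 j (by omega)]
            exact I1 (i - L) (j - L) (by omega) (by omega)
      · -- arcs
        intro i hib
        by_cases h1 : i + 1 ≤ p
        · rw [hw1 i (by omega), hw1 (i + 1) h1]; exact I2 i (by omega)
        · by_cases h2 : i ≤ p
          · -- i = p
            have hip : i = p := by omega
            rw [hw1 i h2, hw2 (i + 1) (by omega) (by omega)]
            have hidx : a + (i + 1) - p - 1 = a := by omega
            rw [hidx, hip]
            have hwp : w' p = v' g := by rw [hpdef]; exact I5 g (by omega)
            rw [hwp]
            obtain ⟨-, ha1, -⟩ := hf' a (by omega)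
            rw [hfa] at ha1; exact ha1
          · by_cases h3 : i + 1 ≤ p + L
            · rw [hw2 i (by omega) (by omega), hw2 (i + 1) (by omega) h3]
              have hidx : a + (i + 1) - p - 1 = (a + i - p - 1) + 1 := by omega
              rw [hidx]
              exact hu'arc (a + i - p - 1) (by omega)
            · by_cases h4 : i ≤ p + L
              · -- i = p + L
                rw [hw2 i (by omega) h4, hw3 (i + 1) (by omega)]
                have h5 : a + i - p - 1 = k - 1 := by omega
                have h6 : i + 1 - L = p + 1 := by omega
                rw [h5, h6]
                have hwp1 : w' (p + 1) = v' (g + 1) := by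
                  rw [← hgap]; exact I5 (g + 1) hgt
                rw [hwp1]; exact harc2
              · rw [hw3 i (by omega), hw3 (i + 1) (by omega)]
                have h6 : i + 1 - L = (i - L) + 1 := by omega
                rw [h6]
                exact I2 (i - L) (by omega)
      · -- e bound
        intro j hj
        have hb := I3 j hj
        by_cases h : e' j ≤ p
        · rw [he1 j h]; omega
        · rw [he2 j (by omega)]; omega
      · -- e mono
        intro j1 j2 h12 hj2
        have hm12 := I4 j1 j2 h12 hj2
        by_cases h1 : e' j1 ≤ p
        · rw [he1 j1 h1]
          by_cases h2 : e' j2 ≤ p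
          · rw [he1 j2 h2]; omega
          · rw [he2 j2 (by omega)]; omega
        · rw [he2 j1 (by omega)]
          by_cases h2 : e' j2 ≤ p
          · rw [he1 j2 h2]; omega
          · rw [he2 j2 (by omega)]; omega
      · -- w (e j) = v' j
        intro j hj
        by_cases h : e' j ≤ p
        · rw [he1 j h, hw1 (e' j) h]; exact I5 j hj
        · rw [he2 j (by omega), hw3 (e' j + L) (by omega)]
          have h6 : e' j + L - L = e' j := by omega
          rw [h6]; exact I5 j hj
      · -- e 0 = 0
        have h0 := I6
        rw [he1 0 (by omega)]; exact h0
      · -- e (t-1)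
        have h1 := I7
        have h2 : p < e' (t - 1) := by
          have := I4 g (t - 1) (by omega) (by omega); omega
        rw [he2 (t - 1) h2]; omega
      · -- range ⊆
        intro i hi
        by_cases h1 : i ≤ p
        · rw [hw1 i h1]
          rcases I8 i (by omega) with ⟨j, hj, hh⟩ | ⟨m, hm, hh⟩
          · exact Or.inl ⟨j, hj, hh⟩
          · exact Or.inr ⟨m, by omega, hh⟩
        · by_cases h2 : i ≤ p + L
          · rw [hw2 i (by omega) h2]
            exact Or.inr ⟨a + i - p - 1, by omega, rfl⟩
          · rw [hw3 i (by omega)]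
            rcases I8 (i - L) (by omega) with ⟨j, hj, hh⟩ | ⟨m, hm, hh⟩
            · exact Or.inl ⟨j, hj, hh⟩
            · exact Or.inr ⟨m, by omega, hh⟩
      · -- every u' m, m < k, occurs
        intro m hm
        by_cases hma : m < a
        · obtain ⟨i, hi, hwi⟩ := I9 m hma
          by_cases h : i ≤ p
          · exact ⟨i, by omega, by rw [hw1 i h]; exact hwi⟩
          · refine ⟨i + L, by omega, ?_⟩
            rw [hw3 (i + L) (by omega)]
            have h6 : i + L - L = i := by omega
            rw [h6]; exact hwi
        · refine ⟨p + 1 + (m - a), by omega, ?_⟩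
          rw [hw2 (p + 1 + (m - a)) (by omega) (by omega)]
          have h6 : a + (p + 1 + (m - a)) - p - 1 = m := by omega
          rw [h6]
      · -- empty gaps
        intro g' hg' hnone
        have hgg : g' ≠ g := by
          intro h
          exact hnone (k - 1) (by omega) (by rw [← hgdef]; omega)
        have hIH10 : e' (g' + 1) = e' g' + 1 := I10 g' hg' (fun m hm => hnone m (by omega))
        have hinj : e' g' ≠ p := by
          intro h
          rcases lt_trichotomy g' g with hc | hc | hc
          · have := I4 g' g hc (by omega); omega
          · exact hgg hc
          · have := I4 g g' hc (by omega); omega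
        by_cases h : e' g' ≤ p
        · rw [he1 g' h, he1 (g' + 1) (by omega)]
          exact hIH10
        · rw [he2 g' (by omega), he2 (g' + 1) (by omega)]
          omega
  intro k hk1 hks
  obtain ⟨wN, e, C1, C2, C3, C4, C5, C6, C7, C8, C9, C10⟩ := main k hks
  refine ⟨fun i => wN i.1, ⟨?_, ?_⟩, ?_, ?_, ?_⟩
  · intro i j hEq
    by_contra hne
    have hne' : i.1 ≠ j.1 := fun h => hne (Fin.ext h)
    rcases Nat.lt_or_ge i.1 j.1 with h | h
    · exact C1 i.1 j.1 h j.2 hEq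
    · exact C1 j.1 i.1 (by omega) i.2 hEq.symm
  · intro i h
    exact C2 i h
  · have h := C5 0 (by omega)
    rw [C6, hv' 0 (by omega)] at h
    exact h
  · have h := C5 (t - 1) (by omega)
    rw [C7, hv' (t - 1) (by omega)] at h
    exact h
  · ext x
    simp only [Set.mem_union, Set.mem_range, Set.mem_setOf_eq]
    constructor
    · rintro ⟨i, rfl⟩
      rcases C8 i.1 i.2 with ⟨j, hj, hwi⟩ | ⟨m, hm, hwi⟩
      · left
        refine ⟨⟨j, hj⟩, ?_⟩
        rw [hv' j hj] at hwi
        exact hwi.symm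
      · right
        refine ⟨m, hm, ?_⟩
        rw [hu' m (by omega)] at hwi
        exact hwi
    · rintro (⟨j, rfl⟩ | ⟨m, hm, rfl⟩)
      · refine ⟨⟨e j.1, C3 j.1 j.2⟩, ?_⟩
        have h := C5 j.1 j.2
        rw [hv' j.1 j.2] at h
        exact h
      · obtain ⟨i, hi, hwi⟩ := C9 m hm
        refine ⟨⟨i, hi⟩, ?_⟩
        rw [hu' m (by omega)] at hwi
        exact hwi
end

section
/- Let D be a digraph of order p ≥ 3 containing a directed cycle C of length m with 2 ≤ m ≤ p−1, and let x be a vertex not on C. If d(x, V(C)) ≥ m+1, then for every k with 2 ≤ k ≤ m+1, D contains a cycle of length k passing through x. -/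
variable {V : Type*}

/-- Häggkvist–Thomassen lemma. -/
theorem stmt4 {V : Type*} (A : V → V → Prop) (hloop : ∀ v, ¬ A v v)
    (p : ℕ) (hp : 3 ≤ p) (hcard : Nat.card V = p)
    (m : ℕ) (hm2 : 2 ≤ m) (hmp : m ≤ p - 1)
    (c : Fin m → V) (hc : IsCycle A c)
    (v : V) (hv : v ∉ Set.range c)
    (hdeg : m + 1 ≤ degOn A v (Set.range c)) :
    ∀ (k : ℕ) (_hk2 : 2 ≤ k) (_hkm : k ≤ m + 1),
      ∃ d : Fin k → V, IsCycle A d ∧ v ∈ Set.range d := by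
  classical
  intro k hk2 hkm
  haveI : NeZero m := ⟨by omega⟩
  -- the "shift" element of Fin m
  set t : Fin m := ⟨k - 2, by omega⟩ with ht
  -- arc along the cycle
  have harc : ∀ a : Fin m, A (c a) (c (a + 1)) := by
    intro a
    have h := hc.2 a.1 a.2
    have e1 : (⟨a.1, a.2⟩ : Fin m) = a := rfl
    have e2 : (⟨(a.1 + 1) % m, Nat.mod_lt _ (by omega)⟩ : Fin m) = a + 1 := by
      apply Fin.ext
      simp [Fin.val_add, Fin.val_one', Nat.mod_eq_of_lt (show 1 < m by omega)]
    rw [e1, e2] at h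
    exact h
  -- counting
  set S1 : Finset (Fin m) := Finset.univ.filter (fun i => A v (c i)) with hS1
  set S2 : Finset (Fin m) := Finset.univ.filter (fun i => A (c (i + t)) v) with hS2
  have key : ∀ P : V → Prop, Nat.card {u | u ∈ Set.range c ∧ P u}
      = ({i : Fin m | P (c i)}).ncard := by
    intro P
    have himg : {u | u ∈ Set.range c ∧ P u} = c '' {i : Fin m | P (c i)} := by
      ext u
      constructor
      · rintro ⟨⟨i, rfl⟩, h⟩; exact ⟨i, h, rfl⟩
      · rintro ⟨i, h, rfl⟩; exact ⟨⟨i, rfl⟩, h⟩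
    rw [Nat.card_coe_set_eq, himg, Set.ncard_image_of_injective _ hc.1]
  have h1 : Nat.card {u | u ∈ Set.range c ∧ A v u} = S1.card := by
    rw [key, Set.ncard_eq_toFinset_card']
    simp [hS1]
  have hshift : ({i : Fin m | A (c i) v}).ncard = ({i : Fin m | A (c (i + t)) v}).ncard := by
    have : {i : Fin m | A (c i) v} = (fun i => i + t) '' {i : Fin m | A (c (i + t)) v} := by
      ext j
      constructor
      · intro h; exact ⟨j - t, by simpa using h, by simp⟩
      · rintro ⟨i, h, rfl⟩; exact h
    rw [this, Set.ncard_image_of_injective _ (add_left_injective t)]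
  have h2 : Nat.card {u | u ∈ Set.range c ∧ A u v} = S2.card := by
    rw [key, hshift, Set.ncard_eq_toFinset_card']
    simp [hS2]
  have hsum : m + 1 ≤ S1.card + S2.card := by
    have := hdeg
    unfold degOn at this
    omega
  -- pigeonhole
  obtain ⟨i, hi⟩ : (S1 ∩ S2).Nonempty := by
    by_contra hne
    rw [Finset.not_nonempty_iff_eq_empty] at hne
    have hcui := Finset.card_union_add_card_inter S1 S2
    have hle : (S1 ∪ S2).card ≤ m := by
      calc (S1 ∪ S2).card ≤ (Finset.univ : Finset (Fin m)).card := Finset.card_le_univ _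
        _ = m := by simp
    rw [hne] at hcui
    simp at hcui
    omega
  simp only [Finset.mem_inter, hS1, hS2, Finset.mem_filter, Finset.mem_univ, true_and] at hi
  obtain ⟨hA1, hA2⟩ := hi
  -- construct the cycle of length k
  refine ⟨fun j => if h : j.1 = 0 then v else c (i + ⟨j.1 - 1, by omega⟩), ⟨?_, ?_⟩, ?_⟩
  · -- injectivity
    intro a b hab
    by_cases ha : a.1 = 0 <;> by_cases hb : b.1 = 0 <;>
      simp only [ha, hb, dif_pos, dif_neg, dite_true, dite_false] at hab
    · exact Fin.ext (by omega)
    · exact absurd ⟨_, hab.symm⟩ hv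
    · exact absurd ⟨_, hab⟩ hv
    · have := add_left_cancel (hc.1 hab)
      have : a.1 - 1 = b.1 - 1 := by
        simpa [Fin.ext_iff] using this
      exact Fin.ext (by omega)
  · -- arcs
    intro j hj
    rcases Nat.lt_or_ge j (k - 1) with hjk | hjk
    · -- j < k - 1, so (j+1) % k = j+1
      have hmod : (j + 1) % k = j + 1 := Nat.mod_eq_of_lt (by omega)
      rcases Nat.eq_zero_or_pos j with hj0 | hjpos
      · subst hj0
        simp only [hmod, dif_pos, dif_neg (by omega : ¬ (1 : ℕ) = 0), dite_true]
        have : (i + ⟨1 - 1, by omega⟩ : Fin m) = i := by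
          apply Fin.ext
          simp [Fin.val_add, Nat.mod_eq_of_lt i.isLt]
        rw [this]
        exact hA1
      · simp only [hmod, dif_neg (by omega : ¬ j = 0), dif_neg (by omega : ¬ j + 1 = 0)]
        have heq : (i + ⟨j + 1 - 1, by omega⟩ : Fin m) = (i + ⟨j - 1, by omega⟩) + 1 := by
          apply Fin.ext
          simp only [Fin.val_add]
          rw [show ((1 : Fin m) : ℕ) = 1 % m from rfl, ← Nat.add_mod]
          congr 1
          omega
        rw [heq]
        exact harc _
    · -- j = k - 1
      have hj' : j = k - 1 := by omega
      subst hj'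
      have hmod : (k - 1 + 1) % k = 0 := by
        rw [show k - 1 + 1 = k by omega]
        exact Nat.mod_self k
      simp only [hmod, dif_pos, dif_neg (show ¬ k - 1 = 0 by omega), dite_true]
      have : (⟨k - 1 - 1, by omega⟩ : Fin m) = t := by
        apply Fin.ext
        simp [ht]
        omega
      rw [this]
      exact hA2
  · exact ⟨⟨0, by omega⟩, by simp⟩
end

section
/- There exists a digraph D of order 4 with a vertex z such that every vertex other than z has degree at least 4, D contains a cycle of length at least 2 through z, and yet D has no Hamiltonian bypass. (Concretely, the digraph obtained from a complete digraph on 3 vertices and a complete digraph on 2 vertices by identifying one vertex of each works.) -/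
variable {V : Type*}

def Aex : Fin 4 → Fin 4 → Prop := fun u v =>
  u ≠ v ∧ ((u ≠ 3 ∧ v ≠ 3) ∨ (u = 2 ∧ v = 3) ∨ (u = 3 ∧ v = 2))

instance : DecidableRel Aex := fun u v => by unfold Aex; infer_instance

lemma lout : ∀ u : Fin 4, u ≠ 3 → 2 ≤ Nat.card {v | Aex u v} := by
  intro u hu; rw [Nat.card_eq_fintype_card]; revert hu; revert u; decide

lemma lin : ∀ u : Fin 4, u ≠ 3 → 2 ≤ Nat.card {v | Aex v u} := by
  intro u hu; rw [Nat.card_eq_fintype_card]; revert hu; revert u; decide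

lemma lA3 : ∀ v, Aex 3 v → v = 2 := by decide
lemma lA3' : ∀ v, Aex v 3 → v = 2 := by decide

/-- Lemma 4.1 fails for p = 4. -/
theorem stmt9 :
    ∃ (A : Fin 4 → Fin 4 → Prop) (z : Fin 4),
      (∀ v, ¬ A v v) ∧
      (∀ v, v ≠ z → 4 ≤ deg A v) ∧
      (∃ (m : ℕ) (c : Fin m → Fin 4), 2 ≤ m ∧ IsCycle A c ∧ z ∈ Set.range c) ∧
      ¬ HasHamBypass A := by
  refine ⟨Aex, 3, by decide, ?_, ?_, ?_⟩
  · intro v hv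
    have h1 := lout v hv
    have h2 := lin v hv
    unfold deg outDeg inDeg
    omega
  · exact ⟨2, ![2, 3], le_refl _, ⟨by decide, by decide⟩, ⟨1, rfl⟩⟩
  · rintro ⟨f, hb, hp, h0, ha⟩
    have hc : Nat.card (Fin 4) = 4 := by simp
    have a01 : Aex (f ⟨0, by omega⟩) (f ⟨1, by omega⟩) := hp 0 (by omega)
    have a12 : Aex (f ⟨1, by omega⟩) (f ⟨2, by omega⟩) := hp 1 (by omega)
    have a23 : Aex (f ⟨2, by omega⟩) (f ⟨3, by omega⟩) := hp 2 (by omega)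
    have a03 : Aex (f ⟨0, by omega⟩) (f ⟨3, by omega⟩) := by
      have : (⟨Nat.card (Fin 4) - 1, by omega⟩ : Fin (Nat.card (Fin 4))) = ⟨3, by omega⟩ :=
        Fin.ext (by simp [hc])
      rw [← this]; exact ha
    obtain ⟨⟨kv, hklt⟩, hkv⟩ := hb.2 3
    have hklt4 : kv < 4 := by omega
    interval_cases kv
    · rw [hkv] at a01 a03
      exact absurd (hb.1 ((lA3 _ a01).trans (lA3 _ a03).symm)) (by simp)
    · rw [hkv] at a01 a12
      exact absurd (hb.1 ((lA3' _ a01).trans (lA3 _ a12).symm)) (by simp)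
    · rw [hkv] at a12 a23
      exact absurd (hb.1 ((lA3' _ a12).trans (lA3 _ a23).symm)) (by simp)
    · rw [hkv] at a23 a03
      exact absurd (hb.1 ((lA3' _ a23).trans (lA3' _ a03).symm)) (by simp)
end

section
/- Let D be a 2-strong digraph of order p ≥ 3 and let z be a vertex of D such that every vertex of V(D) ∖ {z} has degree at least p. If a longest path through z, say P = x₁x₂⋯x_l, has length at least p − 3 and the arc x₁x_l is present in D, then D contains a Hamiltonian bypass. -/
variable {V : Type*}

section Aux

variable {V : Type*}

/-- Inserting a new vertex `u` at position `k` of a path yields a longer path. -/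
lemma insert_path (A : V → V → Prop) {l : ℕ} (hl0 : 0 < l) (x : Fin l → V) (hx : IsPath A x)
    (u : V) (hu : u ∉ Set.range x) (k : ℕ) (hk : k ≤ l)
    (h1 : ∀ _ : 0 < k, A (x ⟨k - 1, by omega⟩) u)
    (h2 : ∀ h : k < l, A u (x ⟨k, h⟩)) :
    ∃ y : Fin (l + 1) → V, IsPath A y ∧ Set.range x ⊆ Set.range y := by
  set x' : ℕ → V := fun n => if h : n < l then x ⟨n, h⟩ else x ⟨0, hl0⟩ with hx'
  have hx'v : ∀ (n : ℕ) (h : n < l), x' n = x ⟨n, h⟩ := fun n h => by simp [hx', h]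
  have hx'r : ∀ n, x' n ∈ Set.range x := fun n => by
    by_cases h : n < l
    · exact ⟨⟨n, h⟩, (hx'v n h).symm⟩
    · exact ⟨⟨0, hl0⟩, by simp [hx', h]⟩
  have hx'inj : ∀ a b : ℕ, a < l → b < l → x' a = x' b → a = b := by
    intro a b ha hb h
    rw [hx'v a ha, hx'v b hb] at h
    simpa using congrArg Fin.val (hx.1 h)
  have hx'arc : ∀ i : ℕ, i + 1 < l → A (x' i) (x' (i + 1)) := by
    intro i hi
    rw [hx'v i (by omega), hx'v (i+1) hi]
    exact hx.2 i hi
  have h1' : 0 < k → A (x' (k - 1)) u := fun h => by rw [hx'v _ (by omega)]; exact h1 h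
  have h2' : k < l → A u (x' k) := fun h => by rw [hx'v _ h]; exact h2 h
  set y : Fin (l + 1) → V := fun j =>
    if (j : ℕ) < k then x' j else if (j : ℕ) = k then u else x' ((j : ℕ) - 1) with hy
  have hv1 : ∀ (j : Fin (l+1)), (j:ℕ) < k → y j = x' j := by
    intro j h; simp only [hy]; rw [if_pos h]
  have hv2 : ∀ (j : Fin (l+1)), (j:ℕ) = k → y j = u := by
    intro j h; simp only [hy]; rw [if_neg (by omega), if_pos h]
  have hv3 : ∀ (j : Fin (l+1)), k < (j:ℕ) → y j = x' ((j:ℕ) - 1) := by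
    intro j h; simp only [hy]; rw [if_neg (by omega), if_neg (by omega)]
  refine ⟨y, ⟨?_, ?_⟩, ?_⟩
  · intro a b hab
    have hal : (a:ℕ) < l + 1 := a.2
    have hbl : (b:ℕ) < l + 1 := b.2
    apply Fin.ext
    rcases lt_trichotomy (a:ℕ) k with ha | ha | ha <;>
      rcases lt_trichotomy (b:ℕ) k with hb | hb | hb
    · rw [hv1 a ha, hv1 b hb] at hab; exact hx'inj _ _ (by omega) (by omega) hab
    · rw [hv1 a ha, hv2 b hb] at hab; exact absurd (hab ▸ hx'r (a:ℕ)) hu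
    · rw [hv1 a ha, hv3 b hb] at hab
      have := hx'inj _ _ (by omega) (by omega) hab; omega
    · rw [hv2 a ha, hv1 b hb] at hab; exact absurd (hab ▸ hx'r (b:ℕ)) hu
    · omega
    · rw [hv2 a ha, hv3 b hb] at hab; exact absurd (hab ▸ hx'r _) hu
    · rw [hv3 a ha, hv1 b hb] at hab
      have := hx'inj _ _ (by omega) (by omega) hab; omega
    · rw [hv3 a ha, hv2 b hb] at hab; exact absurd (hab ▸ hx'r _) hu
    · rw [hv3 a ha, hv3 b hb] at hab
      have := hx'inj _ _ (by omega) (by omega) hab; omega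
  · intro i hi
    rcases lt_trichotomy (i+1) k with hb | hb | hb
    · rw [hv1 ⟨i, by omega⟩ (by simp; omega), hv1 ⟨i+1, hi⟩ (by simpa using hb)]
      exact hx'arc i (by omega)
    · rw [hv1 ⟨i, by omega⟩ (by simp; omega), hv2 ⟨i+1, hi⟩ (by simpa using hb)]
      rw [show ((⟨i, by omega⟩ : Fin (l+1)) : ℕ) = k - 1 from by simp; omega]
      exact h1' (by omega)
    · rcases Nat.lt_or_ge (i:ℕ) k with ha | ha
      · omega
      · rcases Nat.eq_or_lt_of_le ha with ha' | ha'
        · rw [hv2 ⟨i, by omega⟩ (by simp; omega), hv3 ⟨i+1, hi⟩ (by simp; omega)]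
          rw [show ((i:ℕ)+1-1) = k from by omega]
          exact h2' (by omega)
        · rw [hv3 ⟨i, by omega⟩ (by simp; omega), hv3 ⟨i+1, hi⟩ (by simp; omega)]
          rw [show ((i:ℕ)+1-1) = (i-1)+1 from by omega]
          exact hx'arc (i-1) (by omega)
  · rintro v ⟨i, rfl⟩
    rcases Nat.lt_or_ge (i:ℕ) k with h | h
    · exact ⟨⟨i, by omega⟩, by rw [hv1 _ (by simpa using h), hx'v _ (by simpa using i.2)]⟩
    · refine ⟨⟨(i:ℕ)+1, by omega⟩, ?_⟩
      rw [hv3 _ (by simp; omega)]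
      rw [show (((⟨(i:ℕ)+1, by omega⟩ : Fin (l+1)) : ℕ) - 1) = (i:ℕ) from by simp]
      rw [hx'v _ i.2]

lemma count_bound {l : ℕ} (hl : 1 ≤ l) (O I : Finset (Fin l))
    (h0 : (⟨0, by omega⟩ : Fin l) ∉ O)
    (hl1 : (⟨l - 1, by omega⟩ : Fin l) ∉ I)
    (hOI : ∀ (i : ℕ) (h : i + 1 < l), (⟨i, by omega⟩ : Fin l) ∈ I → (⟨i + 1, h⟩ : Fin l) ∉ O) :
    O.card + I.card ≤ l - 1 := by
  have hOpos : ∀ i ∈ O, 1 ≤ (i : ℕ) := by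
    intro i hi
    by_contra h
    have : i = (⟨0, by omega⟩ : Fin l) := Fin.ext (by simp; omega)
    exact h0 (this ▸ hi)
  have hIlt : ∀ i ∈ I, (i : ℕ) < l - 1 := by
    intro i hi
    have hil : (i : ℕ) < l := i.2
    by_contra h
    have : i = (⟨l - 1, by omega⟩ : Fin l) := Fin.ext (by simp; omega)
    exact hl1 (this ▸ hi)
  set O' : Finset ℕ := O.image (fun i : Fin l => (i : ℕ) - 1) with hO'
  set I' : Finset ℕ := I.image (fun i : Fin l => (i : ℕ)) with hI'
  have hcO : O'.card = O.card := by
    apply Finset.card_image_of_injOn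
    intro a ha b hb hab
    simp only at hab
    exact Fin.ext (by have := hOpos a ha; have := hOpos b hb; omega)
  have hcI : I'.card = I.card := by
    apply Finset.card_image_of_injOn
    intro a _ b _ hab
    exact Fin.ext hab
  have hsub : O' ∪ I' ⊆ Finset.range (l - 1) := by
    intro n hn
    rw [Finset.mem_union] at hn
    rw [Finset.mem_range]
    rcases hn with hn | hn
    · obtain ⟨a, ha, rfl⟩ := Finset.mem_image.mp hn
      have h1 := hOpos a ha
      have h2 : (a : ℕ) < l := a.2
      omega
    · obtain ⟨a, ha, rfl⟩ := Finset.mem_image.mp hn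
      exact hIlt a ha
  have hdisj : Disjoint O' I' := by
    rw [Finset.disjoint_left]
    rintro n hn hn'
    obtain ⟨a, ha, han⟩ := Finset.mem_image.mp hn
    obtain ⟨b, hb, hbn⟩ := Finset.mem_image.mp hn'
    have ha1 := hOpos a ha
    have hal : (a : ℕ) < l := a.2
    have h1 : n + 1 < l := by omega
    apply hOI n h1
    · have : (⟨n, by omega⟩ : Fin l) = b := Fin.ext (by simp; omega)
      exact this ▸ hb
    · have : (⟨n + 1, h1⟩ : Fin l) = a := Fin.ext (by simp; omega)
      exact this ▸ ha
  calc O.card + I.card = (O' ∪ I').card := by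
        rw [Finset.card_union_of_disjoint hdisj, hcO, hcI]
    _ ≤ (Finset.range (l - 1)).card := Finset.card_le_card hsub
    _ = l - 1 := Finset.card_range _

end Aux

/-- Lemma 4.2. -/
theorem stmt10 {V : Type*} (A : V → V → Prop) (hloop : ∀ v, ¬ A v v)
    (p : ℕ) (hp : 3 ≤ p) (hcard : Nat.card V = p)
    (htwo : TwoStrong A)
    (z : V) (hdeg : ∀ v : V, v ≠ z → p ≤ deg A v)
    (l : ℕ) (hl : 2 ≤ l)
    (x : Fin l → V) (hpath : IsPath A x) (hzx : z ∈ Set.range x)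
    (hlongest : ∀ (m : ℕ) (y : Fin m → V), IsPath A y → z ∈ Set.range y → m ≤ l)
    (hlen : p ≤ l + 2)
    (harc : A (x ⟨0, by omega⟩) (x ⟨l - 1, by omega⟩)) :
    HasHamBypass A := by
  classical
  have hV : Finite V := Nat.finite_of_card_ne_zero (by omega)
  have hlle : l ≤ p := by
    have h := Nat.card_le_card_of_injective x hpath.1
    simpa [hcard, Nat.card_eq_fintype_card] using h
  rcases eq_or_lt_of_le hlle with hlp | hlp
  · -- `l = p`: the path is Hamiltonian, and `harc` makes it a bypass.
    have hveq : l = Nat.card V := by omega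
    subst hveq
    refine ⟨x, ?_, hpath.2, ⟨by omega, harc⟩⟩
    have := Fintype.ofFinite V
    refine (Fintype.bijective_iff_injective_and_card x).mpr ⟨hpath.1, ?_⟩
    simp [Nat.card_eq_fintype_card]
  · -- `l < p`: find a vertex off the path and contradict the degree bound.
    exfalso
    have hne : Set.range x ≠ Set.univ := by
      intro h
      have h1 : Nat.card (Set.range x) = l := by
        rw [Nat.card_range_of_injective hpath.1]
        simp [Nat.card_eq_fintype_card]
      rw [h] at h1
      rw [Nat.card_univ] at h1
      omega
    obtain ⟨u, hu⟩ := (Set.ne_univ_iff_exists_notMem _).mp hne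
    have huz : u ≠ z := fun h => hu (h ▸ hzx)
    have noIns : ∀ (k : ℕ) (hk : k ≤ l),
        ¬ ((∀ _hk0 : 0 < k, A (x ⟨k - 1, by omega⟩) u) ∧ (∀ h : k < l, A u (x ⟨k, h⟩))) := by
      rintro k hk ⟨hk1, hk2⟩
      obtain ⟨y, hy, hxy⟩ := insert_path A (by omega) x hpath u hu k hk hk1 hk2
      have := hlongest (l + 1) y hy (hxy hzx)
      omega
    have hA0 : ¬ A u (x ⟨0, by omega⟩) := by
      intro h
      exact noIns 0 (by omega) ⟨fun h' => absurd h' (by omega), fun _ => h⟩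
    have hAl : ¬ A (x ⟨l - 1, by omega⟩) u := by
      intro h
      exact noIns l le_rfl ⟨fun _ => h, fun h' => absurd h' (by omega)⟩
    have hins : ∀ (i : ℕ) (h : i + 1 < l), ¬ (A (x ⟨i, by omega⟩) u ∧ A u (x ⟨i + 1, h⟩)) := by
      rintro i h ⟨h1, h2⟩
      exact noIns (i + 1) (by omega) ⟨fun _ => h1, fun _ => h2⟩
    set O : Finset (Fin l) := Finset.univ.filter (fun i => A u (x i)) with hO
    set I : Finset (Fin l) := Finset.univ.filter (fun i => A (x i) u) with hI
    have hcnt : O.card + I.card ≤ l - 1 := by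
      apply count_bound (by omega)
      · simp only [hO, Finset.mem_filter, Finset.mem_univ, true_and]
        exact hA0
      · simp only [hI, Finset.mem_filter, Finset.mem_univ, true_and]
        exact hAl
      · intro i h hi
        simp only [hI, Finset.mem_filter, Finset.mem_univ, true_and] at hi
        simp only [hO, Finset.mem_filter, Finset.mem_univ, true_and]
        exact fun h2 => hins i h ⟨hi, h2⟩
    set T : Set V := (insert u (Set.range x))ᶜ with hT
    have hrange_card : (Set.range x).ncard = l := by
      rw [← Nat.card_coe_set_eq, Nat.card_range_of_injective hpath.1]
      simp [Nat.card_eq_fintype_card]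
    have hTcard : T.ncard = p - (l + 1) := by
      have h1 : (insert u (Set.range x)).ncard = l + 1 := by
        rw [Set.ncard_insert_of_notMem hu, hrange_card]
      have h2 := Set.ncard_add_ncard_compl (insert u (Set.range x))
      rw [hcard, h1, ← hT] at h2
      omega
    have houtb : Nat.card {v | A u v} ≤ O.card + T.ncard := by
      have hsub : {v | A u v} ⊆ (x '' ↑O) ∪ T := by
        intro v hv
        by_cases hvr : v ∈ Set.range x
        · obtain ⟨i, rfl⟩ := hvr
          exact Or.inl ⟨i, by simp only [hO, Finset.mem_coe, Finset.mem_filter,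
            Finset.mem_univ, true_and]; exact hv, rfl⟩
        · refine Or.inr ?_
          simp only [hT, Set.mem_compl_iff, Set.mem_insert_iff, not_or]
          exact ⟨fun hvu => hloop u (hvu ▸ hv), hvr⟩
      calc Nat.card {v | A u v} = ({v | A u v} : Set V).ncard := Nat.card_coe_set_eq _
        _ ≤ ((x '' ↑O) ∪ T).ncard := Set.ncard_le_ncard hsub (Set.toFinite _)
        _ ≤ (x '' ↑O).ncard + T.ncard := Set.ncard_union_le _ _
        _ = O.card + T.ncard := by
            rw [Set.ncard_image_of_injective _ hpath.1, Set.ncard_coe_finset]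
    have hinb : Nat.card {v | A v u} ≤ I.card + T.ncard := by
      have hsub : {v | A v u} ⊆ (x '' ↑I) ∪ T := by
        intro v hv
        by_cases hvr : v ∈ Set.range x
        · obtain ⟨i, rfl⟩ := hvr
          exact Or.inl ⟨i, by simp only [hI, Finset.mem_coe, Finset.mem_filter,
            Finset.mem_univ, true_and]; exact hv, rfl⟩
        · refine Or.inr ?_
          simp only [hT, Set.mem_compl_iff, Set.mem_insert_iff, not_or]
          exact ⟨fun hvu => hloop u (hvu ▸ hv), hvr⟩
      calc Nat.card {v | A v u} = ({v | A v u} : Set V).ncard := Nat.card_coe_set_eq _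
        _ ≤ ((x '' ↑I) ∪ T).ncard := Set.ncard_le_ncard hsub (Set.toFinite _)
        _ ≤ (x '' ↑I).ncard + T.ncard := Set.ncard_union_le _ _
        _ = I.card + T.ncard := by
            rw [Set.ncard_image_of_injective _ hpath.1, Set.ncard_coe_finset]
    have hdegu := hdeg u huz
    rw [deg, outDeg, inDeg] at hdegu
    omega
end

section
/- There exists a balanced bipartite Hamiltonian digraph of order 8 satisfying d⁺(u) + d⁻(v) ≥ 4 for all vertices u, v in different partite sets with uv not an arc, which contains no Hamiltonian bypass. Hence the bound a + 1 in the degree condition for Hamiltonian bypasses in balanced bipartite digraphs is sharp. -/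
variable {V : Type*}

/-- Group label: vertices {0,1},{6,7},{2,3},{4,5} form a blown-up directed 4-cycle. -/
def hm : Fin 8 → ℕ := ![0,0,2,2,3,3,1,1]

lemma hm_lt (v : Fin 8) : hm v < 4 := by fin_cases v <;> decide

lemma cardSet (p : Fin 8 → Prop) [DecidablePred p] :
    Nat.card {v : Fin 8 | p v} = (Finset.univ.filter p).card := by
  rw [Nat.card_coe_set_eq, Set.ncard_eq_toFinset_card', Set.toFinset_setOf]

lemma isCycle_comp_cast {A : V → V → Prop} {n m : ℕ} (hc : n = m) {c : Fin m → V}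
    (h : IsCycle A c) : IsCycle A (c ∘ Fin.cast hc) := by
  subst hc; simpa [Function.comp] using h

/-- sharpness of the bound a + 1. -/
theorem stmt16 :
    ∃ (A : Fin 8 → Fin 8 → Prop) (X : Set (Fin 8)),
      (∀ v, ¬ A v v) ∧ Nat.card X = 4 ∧
      (∀ u v, A u v → (u ∈ X ↔ v ∉ X)) ∧
      Hamiltonian A ∧
      (∀ u v : Fin 8, ((u ∈ X ∧ v ∉ X) ∨ (u ∉ X ∧ v ∈ X)) → ¬ A u v →
        4 ≤ outDeg A u + inDeg A v) ∧
      ¬ HasHamBypass A := by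
  refine ⟨fun u v => hm v = (hm u + 1) % 4, {v | v.val < 4}, ?_, ?_, ?_, ?_, ?_, ?_⟩
  · decide
  · rw [cardSet]; decide
  · decide
  · have hc : Nat.card (Fin 8) = 8 := by simp
    have hcl : ∀ i : Fin 8, hm (![0,6,2,4,1,7,3,5] (i+1)) =
        (hm ((![0,6,2,4,1,7,3,5] : Fin 8 → Fin 8) i) + 1) % 4 := by decide
    have base : IsCycle (fun u v : Fin 8 => hm v = (hm u + 1) % 4) ![0,6,2,4,1,7,3,5] := by
      refine ⟨by decide, ?_⟩
      intro i h
      exact hcl ⟨i, h⟩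
    exact ⟨![0,6,2,4,1,7,3,5] ∘ Fin.cast hc,
      Function.Bijective.comp (by decide) (finCongr hc).bijective,
      isCycle_comp_cast hc base⟩
  · intro u v _ _
    have h1 : outDeg (fun u v : Fin 8 => hm v = (hm u + 1) % 4) u = 2 := by
      rw [outDeg, cardSet]; fin_cases u <;> decide
    have h2 : inDeg (fun u v : Fin 8 => hm v = (hm u + 1) % 4) v = 2 := by
      rw [inDeg, cardSet]; fin_cases v <;> decide
    omega
  · rintro ⟨f, -, hpath, hpos, harc⟩
    have hc : Nat.card (Fin 8) = 8 := by simp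
    have key : ∀ i : ℕ, ∀ h : i < Nat.card (Fin 8),
        hm (f ⟨i, h⟩) = (hm (f ⟨0, hpos⟩) + i) % 4 := by
      intro i
      induction i with
      | zero => intro h; simp [Nat.mod_eq_of_lt (hm_lt _)]
      | succ n ih =>
        intro h
        have hn : n < Nat.card (Fin 8) := by omega
        have := hpath n (by omega)
        rw [this, ih hn]
        omega
    have h7 := key (Nat.card (Fin 8) - 1) (by omega)
    rw [harc] at h7
    have := hm_lt (f ⟨0, hpos⟩)
    omega
end
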